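/- arXiv:2402.13854 — 3 statements merged into one kernel-verified Lean document; each statement's English description precedes it below -/
import Mathlib

section
/- Let A be an m×m complex matrix that is strictly dissipative, i.e., its imaginary part Im(A) = (A - A*)/(2i) is a positive-definite Hermitian matrix (here A need not itself be Hermitian, but assume A is symmetric as a complex matrix). Then |det(A)| ≥ det(Im(A)). In particular, if Im(A) ≥ c·I for some c > 0, then |det(A)| ≥ c^m. -/
/-!
Write `A = R + i B` with `R = Re A`, `B = Im A` real symmetric and `B` positive definite, and let
`L = √B`. Then `A = L (S + i) L` with `S = L⁻¹ R L⁻¹` real symmetric, so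
`|det A| = det B · |det (S + i)|`. Since `S` is real symmetric, `S - i` is the conjugate transpose of
`S + i`, hence `|det (S + i)|² = det ((S + i)(S - i)) = det (S² + 1) ≥ 1`.
-/

open Matrix

namespace Matrix

variable {n : Type*} [Fintype n] [DecidableEq n]

open scoped MatrixOrder in
theorem pow_card_le_det_of_posSemidef_sub_smul_one {H : Matrix n n ℝ} {c : ℝ} (hc : 0 ≤ c)
    (h : (H - c • 1).PosSemidef) : c ^ Fintype.card n ≤ H.det := by
  have hH : H.IsHermitian := by
    simpa using h.isHermitian.add ((isHermitian_one (n := n) (α := ℝ)).smul (IsSelfAdjoint.all c))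
  have hc_le : ∀ i, c ≤ hH.eigenvalues i := fun i =>
    (algebraMap_le_iff_le_spectrum (a := H) hH.isSelfAdjoint).1
      (by rwa [Algebra.algebraMap_eq_smul_one]) _ (hH.eigenvalues_mem_spectrum_real i)
  rw [hH.det_eq_prod_eigenvalues]
  calc c ^ Fintype.card n = ∏ _i : n, c := by simp
    _ ≤ ∏ i, hH.eigenvalues i := Finset.prod_le_prod (fun _ _ => hc) fun i _ => hc_le i
    _ = ∏ i, (hH.eigenvalues i : ℝ) := rfl

theorem one_le_norm_det_map_ofReal_add_I_smul_one {S : Matrix n n ℝ} (hS : S.IsHermitian) :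
    1 ≤ ‖(S.map ((↑) : ℝ → ℂ) + Complex.I • 1).det‖ := by
  set φ := (Complex.ofRealHom : ℝ →+* ℂ).mapMatrix (m := n)
  change 1 ≤ ‖(φ S + Complex.I • 1).det‖
  have hφS : (φ S)ᴴ = φ S := by
    ext i j
    simpa [φ] using congrArg Complex.ofReal (hS.apply i j)
  have hconj : star (φ S + Complex.I • 1).det = (φ S - Complex.I • 1).det := by
    rw [← det_conjTranspose, conjTranspose_add, conjTranspose_smul, conjTranspose_one, hφS,
      Complex.star_def, Complex.conj_I, neg_smul, sub_eq_add_neg]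
  have hfactor : (φ S + Complex.I • 1) * (φ S - Complex.I • 1) = φ (S * S + 1) := by
    rw [map_add, map_mul, map_one, mul_sub, add_mul, add_mul, mul_smul_comm, smul_mul_assoc,
      smul_mul_assoc, mul_smul_comm, smul_smul, Complex.I_mul_I]
    simp only [Matrix.mul_one, Matrix.one_mul, neg_smul, one_smul]
    abel
  have hnormSq : Complex.normSq (φ S + Complex.I • 1).det = (S * S + 1).det := by
    apply Complex.ofReal_injective
    rw [← Complex.mul_conj, ← Complex.star_def, hconj, ← det_mul, hfactor]
    exact (Complex.ofRealHom.map_det _).symm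
  have hdet : 1 ≤ (S * S + 1).det := by
    have hpsd : (S * S).PosSemidef := by
      simpa only [hS.eq] using posSemidef_conjTranspose_mul_self S
    simpa using pow_card_le_det_of_posSemidef_sub_smul_one zero_le_one (by simpa using hpsd)
  rw [← one_le_sq_iff₀ (norm_nonneg _), Complex.sq_norm, hnormSq]
  exact hdet

open scoped MatrixOrder in
theorem det_map_im_le_norm_det {A : Matrix n n ℂ} (hA : Aᵀ = A) (hB : (A.map Complex.im).PosDef) :
    (A.map Complex.im).det ≤ ‖A.det‖ := by
  set B := A.map Complex.im
  set R := A.map Complex.re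
  set L := CFC.sqrt B
  set S := L⁻¹ * R * L⁻¹
  set φ := (Complex.ofRealHom : ℝ →+* ℂ).mapMatrix (m := n)
  have hLL : L * L = B := CFC.sqrt_mul_sqrt_self B hB.posSemidef.nonneg
  have hL : L.IsHermitian := (CFC.sqrt_nonneg B).posSemidef.isHermitian
  have hLdet : L.det * L.det = B.det := by rw [← det_mul, hLL]
  have hLunit : IsUnit L.det :=
    isUnit_iff_ne_zero.2 fun h => hB.det_pos.ne' (by rw [← hLdet, h, zero_mul])
  have hR : R.IsHermitian := by
    ext i j
    exact congrArg Complex.re (congrFun (congrFun hA j) i).symm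
  have hS : S.IsHermitian := by
    simpa only [S, hL.inv.eq] using isHermitian_conjTranspose_mul_mul L⁻¹ hR
  have hLSL : L * S * L = R := by
    simp only [S, Matrix.mul_assoc, nonsing_inv_mul _ hLunit, Matrix.mul_one,
      mul_nonsing_inv_cancel_left _ _ hLunit]
  have hA_eq : A = φ L * (φ S + Complex.I • 1) * φ L := by
    rw [mul_add, add_mul, mul_smul_comm, smul_mul_assoc, Matrix.mul_one, ← map_mul, ← map_mul,
      ← map_mul, hLSL, hLL]
    ext i j
    simp [φ, R, B, mul_comm Complex.I]
  calc B.det = B.det * 1 := (mul_one _).symm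
    _ ≤ B.det * ‖(φ S + Complex.I • 1).det‖ :=
      mul_le_mul_of_nonneg_left (one_le_norm_det_map_ofReal_add_I_smul_one hS) hB.det_pos.le
    _ = ‖A.det‖ := by
      rw [hA_eq, det_mul, det_mul, ← RingHom.map_det, Complex.ofRealHom_eq_coe, norm_mul,
        norm_mul, Complex.norm_real, Real.norm_eq_abs, ← hLdet, ← abs_mul_abs_self L.det]
      ring

end Matrix

/-- A complex symmetric matrix whose (entrywise) imaginary part is positive definite
(a "strictly dissipative" symmetric matrix) satisfies `|det A| ≥ det (Im A)`;
in particular `Im A ≥ c·I` with `c > 0` forces `|det A| ≥ c^m`. -/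
theorem stmt_1 {m : ℕ} (A : Matrix (Fin m) (Fin m) ℂ) (hsymm : Aᵀ = A)
    (hpd : (Matrix.of fun i j => (A i j).im : Matrix (Fin m) (Fin m) ℝ).PosDef) :
    (Matrix.of fun i j => (A i j).im : Matrix (Fin m) (Fin m) ℝ).det ≤ ‖A.det‖ ∧
      ∀ c : ℝ, 0 < c →
        ((Matrix.of fun i j => (A i j).im : Matrix (Fin m) (Fin m) ℝ) - c • 1).PosSemidef →
        c ^ m ≤ ‖A.det‖ := by
  have hdet : (A.map Complex.im).det ≤ ‖A.det‖ := det_map_im_le_norm_det hsymm hpd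
  refine ⟨hdet, fun c hc hcI => ?_⟩
  calc c ^ m = c ^ Fintype.card (Fin m) := by rw [Fintype.card_fin]
    _ ≤ (A.map Complex.im).det := pow_card_le_det_of_posSemidef_sub_smul_one hc.le hcI
    _ ≤ ‖A.det‖ := hdet
end

section
/- Let B be a real positive-definite m×m matrix with eigenvectors v_j and eigenvalues ω_j² > 0, and let Q = ⟨B D, D⟩ = Σ_j (ω_j ∂_{v_j})² be the associated second-order constant-coefficient differential operator on ℝ^m. Then for smooth functions u, v on ℝ^m, Q^k(uv) = Σ_{j+ℓ+|α|=k} (2^{|α|} k!)/(j! ℓ! α!) (D_ω^α Q^j u)(D_ω^α Q^ℓ v), where D_ω^α = ∏_j (ω_j ∂_{v_j})^{α_j} and the sum is over j, ℓ ∈ ℕ and multi-indices α ∈ ℕ^m. -/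
set_option maxHeartbeats 1000000


open Matrix

/-- The directional derivative operator `ω_j ∂_{v_j}`. -/
noncomputable def dirD {m : ℕ} (ω : Fin m → ℝ) (v : Fin m → (Fin m → ℝ)) (j : Fin m)
    (f : (Fin m → ℝ) → ℂ) : (Fin m → ℝ) → ℂ :=
  fun x => ω j • fderiv ℝ f x (v j)

/-- The operator `D_ω^α = ∏_j (ω_j ∂_{v_j})^{α_j}`. -/
noncomputable def multiD {m : ℕ} (ω : Fin m → ℝ) (v : Fin m → (Fin m → ℝ)) (α : Fin m → ℕ) :
    ((Fin m → ℝ) → ℂ) → ((Fin m → ℝ) → ℂ) :=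
  (List.finRange m).foldr (fun j g => (dirD ω v j)^[α j] ∘ g) id

/-- The operator `Q = ⟨BD, D⟩ = Σ_j (ω_j ∂_{v_j})²` in the eigenbasis of `B`. -/
noncomputable def Qop {m : ℕ} (ω : Fin m → ℝ) (v : Fin m → (Fin m → ℝ))
    (f : (Fin m → ℝ) → ℂ) : (Fin m → ℝ) → ℂ :=
  fun x => ∑ j, dirD ω v j (dirD ω v j f) x

namespace Aux

variable {m : ℕ} (ω : Fin m → ℝ) (v : Fin m → (Fin m → ℝ))

theorem smooth_dirD {f : (Fin m → ℝ) → ℂ} (hf : ContDiff ℝ (⊤ : ℕ∞) f) (j : Fin m) :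
    ContDiff ℝ (⊤ : ℕ∞) (dirD ω v j f) := by
  have h1 : ContDiff ℝ (⊤ : ℕ∞) (fderiv ℝ f) := hf.fderiv_right (by simp)
  have h2 : ContDiff ℝ (⊤ : ℕ∞) (fun x => (fderiv ℝ f x) (v j)) :=
    (ContinuousLinearMap.apply ℝ ℂ (v j)).contDiff.comp h1
  exact h2.const_smul (ω j)

theorem dirD_add {f g : (Fin m → ℝ) → ℂ} (hf : Differentiable ℝ f) (hg : Differentiable ℝ g)
    (j : Fin m) :
    dirD ω v j (fun y => f y + g y) = fun y => dirD ω v j f y + dirD ω v j g y := by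
  funext x
  simp only [dirD, fderiv_fun_add (hf x) (hg x)]
  rw [ContinuousLinearMap.add_apply, smul_add]

theorem dirD_const_mul {f : (Fin m → ℝ) → ℂ} (hf : Differentiable ℝ f) (c : ℂ) (j : Fin m) :
    dirD ω v j (fun y => c * f y) = fun y => c * dirD ω v j f y := by
  funext x
  simp only [dirD, fderiv_const_mul (hf x) c, ContinuousLinearMap.coe_smul',
    Pi.smul_apply]
  rw [mul_smul_comm, smul_eq_mul]

theorem dirD_sum {ι : Type*} {s : Finset ι} {F : ι → (Fin m → ℝ) → ℂ}
    (hF : ∀ a ∈ s, Differentiable ℝ (F a)) (j : Fin m) :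
    dirD ω v j (fun y => ∑ a ∈ s, F a y) = fun y => ∑ a ∈ s, dirD ω v j (F a) y := by
  funext x
  simp only [dirD, fderiv_fun_sum (fun a ha => (hF a ha) x)]
  simp [Finset.smul_sum]

theorem dirD_mul {f g : (Fin m → ℝ) → ℂ} (hf : Differentiable ℝ f) (hg : Differentiable ℝ g)
    (j : Fin m) :
    dirD ω v j (fun y => f y * g y) = fun y => dirD ω v j f y * g y + f y * dirD ω v j g y := by
  funext x
  simp only [dirD, fderiv_fun_mul (hf x) (hg x)]
  simp only [ContinuousLinearMap.add_apply, ContinuousLinearMap.smul_apply, smul_add]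
  simp [smul_comm, mul_comm]
  ring

theorem dirD_comm {f : (Fin m → ℝ) → ℂ} (hf : ContDiff ℝ (⊤ : ℕ∞) f) (i j : Fin m) :
    dirD ω v i (dirD ω v j f) = dirD ω v j (dirD ω v i f) := by
  have hdf : ContDiff ℝ (⊤ : ℕ∞) (fderiv ℝ f) := hf.fderiv_right (by simp)
  have key : ∀ a b : Fin m, ∀ x, dirD ω v a (dirD ω v b f) x
      = (ω a * ω b) • (fderiv ℝ (fderiv ℝ f) x (v a) (v b)) := by
    intro a b x
    have h1 : dirD ω v b f = fun y => ω b • (fun y => (fderiv ℝ f y) (v b)) y := rfl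
    have h2 : fderiv ℝ (dirD ω v b f) x = ω b • fderiv ℝ (fun y => (fderiv ℝ f y) (v b)) x := by
      rw [h1, fderiv_fun_const_smul]
      exact ((ContinuousLinearMap.apply ℝ ℂ (v b)).differentiable.comp
        (hdf.differentiable (by simp))) x
    have h3 : fderiv ℝ (fun y => (fderiv ℝ f y) (v b)) x
        = (fderiv ℝ (fderiv ℝ f) x).flip (v b) := by
      rw [fderiv_clm_apply (hdf.differentiable (by simp) x) (differentiableAt_const _)]
      simp
    simp only [dirD, h2, h3]
    simp [smul_smul]
    ring
  funext x
  rw [key, key]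
  have hsymm : fderiv ℝ (fderiv ℝ f) x (v i) (v j) = fderiv ℝ (fderiv ℝ f) x (v j) (v i) :=
    (hf.contDiffAt.isSymmSndFDerivAt (by rw [minSmoothness_of_isRCLikeNormedField]; exact WithTop.coe_le_coe.2 le_top)) (v i) (v j)
  rw [hsymm, mul_comm]

end Aux

namespace Aux2
open Aux

variable {m : ℕ} (ω : Fin m → ℝ) (v : Fin m → (Fin m → ℝ))

theorem smooth_iter {f : (Fin m → ℝ) → ℂ} (hf : ContDiff ℝ (⊤ : ℕ∞) f) (j : Fin m) (n : ℕ) :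
    ContDiff ℝ (⊤ : ℕ∞) ((dirD ω v j)^[n] f) := by
  induction n with
  | zero => simpa using hf
  | succ n ih => rw [Function.iterate_succ_apply']; exact smooth_dirD ω v ih j

theorem dirD_iter_comm {f : (Fin m → ℝ) → ℂ} (hf : ContDiff ℝ (⊤ : ℕ∞) f) (i j : Fin m) (n : ℕ) :
    dirD ω v i ((dirD ω v j)^[n] f) = (dirD ω v j)^[n] (dirD ω v i f) := by
  induction n generalizing f with
  | zero => simp
  | succ n ih =>
    rw [Function.iterate_succ_apply, Function.iterate_succ_apply,
      ih (smooth_dirD ω v hf j), dirD_comm ω v hf i j]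

/-- The operator given by a list of indices. -/
noncomputable def opL (L : List (Fin m)) (α : Fin m → ℕ) :
    ((Fin m → ℝ) → ℂ) → ((Fin m → ℝ) → ℂ) :=
  L.foldr (fun j g => (dirD ω v j)^[α j] ∘ g) id

theorem opL_cons (j : Fin m) (L : List (Fin m)) (α : Fin m → ℕ) (f : (Fin m → ℝ) → ℂ) :
    opL ω v (j :: L) α f = (dirD ω v j)^[α j] (opL ω v L α f) := rfl

theorem smooth_opL (L : List (Fin m)) (α : Fin m → ℕ) {f : (Fin m → ℝ) → ℂ}
    (hf : ContDiff ℝ (⊤ : ℕ∞) f) : ContDiff ℝ (⊤ : ℕ∞) (opL ω v L α f) := by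
  induction L with
  | nil => exact hf
  | cons j L ih => rw [opL_cons]; exact smooth_iter ω v ih j (α j)

theorem dirD_opL_comm (L : List (Fin m)) (α : Fin m → ℕ) {f : (Fin m → ℝ) → ℂ}
    (hf : ContDiff ℝ (⊤ : ℕ∞) f) (i : Fin m) :
    dirD ω v i (opL ω v L α f) = opL ω v L α (dirD ω v i f) := by
  induction L generalizing f with
  | nil => rfl
  | cons j L ih =>
    rw [opL_cons, opL_cons, dirD_iter_comm ω v (smooth_opL ω v L α hf) i j, ih hf]

theorem opL_congr (L : List (Fin m)) {α α' : Fin m → ℕ} (h : ∀ j ∈ L, α j = α' j)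
    (f : (Fin m → ℝ) → ℂ) : opL ω v L α f = opL ω v L α' f := by
  induction L with
  | nil => rfl
  | cons j L ih =>
    rw [opL_cons, opL_cons, h j List.mem_cons_self,
      ih (fun t ht => h t (List.mem_cons_of_mem j ht))]

theorem opL_single (L : List (Fin m)) (hL : L.Nodup) (α : Fin m → ℕ) {i : Fin m} (hi : i ∈ L)
    {f : (Fin m → ℝ) → ℂ} (hf : ContDiff ℝ (⊤ : ℕ∞) f) :
    opL ω v L (α + Pi.single i 1) f = opL ω v L α (dirD ω v i f) := by
  induction L generalizing f with
  | nil => exact absurd hi List.not_mem_nil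
  | cons j L ih =>
    rcases List.mem_cons.1 hi with rfl | hiL
    · have hnotin : i ∉ L := (List.nodup_cons.1 hL).1
      have h1 : opL ω v L (α + Pi.single i 1) f = opL ω v L α f :=
        opL_congr ω v L (α := α + Pi.single i 1) (α' := α) (fun t ht => by
          have hti : t ≠ i := fun h => hnotin (h ▸ ht)
          simp [Pi.single_eq_of_ne hti]) f
      have h2 : (α + Pi.single i 1 : Fin m → ℕ) i = α i + 1 := by simp
      rw [opL_cons, opL_cons, h1, h2, Function.iterate_succ_apply,
        dirD_opL_comm ω v L α hf i]
    · have hji : j ≠ i := fun h => (List.nodup_cons.1 hL).1 (h ▸ hiL)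
      rw [opL_cons, opL_cons, ih (List.nodup_cons.1 hL).2 hiL hf]
      congr 1
      simp [Pi.single_eq_of_ne hji]

theorem iter_sum {ι : Type*} {s : Finset ι} {F : ι → (Fin m → ℝ) → ℂ}
    (hF : ∀ a ∈ s, ContDiff ℝ (⊤ : ℕ∞) (F a)) (j : Fin m) (n : ℕ) :
    (dirD ω v j)^[n] (fun y => ∑ a ∈ s, F a y) = fun y => ∑ a ∈ s, (dirD ω v j)^[n] (F a) y := by
  induction n with
  | zero => simp
  | succ n ih =>
    rw [Function.iterate_succ_apply', ih,
      dirD_sum ω v (fun a ha => (smooth_iter ω v (hF a ha) j n).differentiable (by simp)) j]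
    simp only [Function.iterate_succ_apply']

theorem opL_sum (L : List (Fin m)) (α : Fin m → ℕ) {ι : Type*} {s : Finset ι}
    {F : ι → (Fin m → ℝ) → ℂ} (hF : ∀ a ∈ s, ContDiff ℝ (⊤ : ℕ∞) (F a)) :
    opL ω v L α (fun y => ∑ a ∈ s, F a y) = fun y => ∑ a ∈ s, opL ω v L α (F a) y := by
  induction L with
  | nil => rfl
  | cons j L ih =>
    rw [opL_cons, ih, iter_sum ω v (fun a ha => smooth_opL ω v L α (hF a ha)) j (α j)]
    rfl

theorem smooth_Qop {f : (Fin m → ℝ) → ℂ} (hf : ContDiff ℝ (⊤ : ℕ∞) f) :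
    ContDiff ℝ (⊤ : ℕ∞) (Qop ω v f) :=
  ContDiff.sum fun j _ => smooth_dirD ω v (smooth_dirD ω v hf j) j

theorem smooth_Qiter {f : (Fin m → ℝ) → ℂ} (hf : ContDiff ℝ (⊤ : ℕ∞) f) (n : ℕ) :
    ContDiff ℝ (⊤ : ℕ∞) ((Qop ω v)^[n] f) := by
  induction n with
  | zero => exact hf
  | succ n ih => rw [Function.iterate_succ_apply']; exact smooth_Qop ω v ih

theorem Qop_opL_comm (L : List (Fin m)) (α : Fin m → ℕ) {f : (Fin m → ℝ) → ℂ}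
    (hf : ContDiff ℝ (⊤ : ℕ∞) f) :
    opL ω v L α (Qop ω v f) = Qop ω v (opL ω v L α f) := by
  have h1 : Qop ω v f = fun x => ∑ j, dirD ω v j (dirD ω v j f) x := rfl
  rw [h1, opL_sum ω v L α (fun j _ => smooth_dirD ω v (smooth_dirD ω v hf j) j)]
  funext x
  refine Finset.sum_congr rfl fun j _ => ?_
  rw [← dirD_opL_comm ω v L α (smooth_dirD ω v hf j) j,
    ← dirD_opL_comm ω v L α hf j]

theorem Qop_sum {ι : Type*} {s : Finset ι} {F : ι → (Fin m → ℝ) → ℂ}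
    (hF : ∀ a ∈ s, ContDiff ℝ (⊤ : ℕ∞) (F a)) :
    Qop ω v (fun y => ∑ a ∈ s, F a y) = fun y => ∑ a ∈ s, Qop ω v (F a) y := by
  funext x
  show ∑ j, dirD ω v j (dirD ω v j fun y => ∑ a ∈ s, F a y) x = _
  have key : ∀ j : Fin m, dirD ω v j (dirD ω v j fun y => ∑ a ∈ s, F a y)
      = fun y => ∑ a ∈ s, dirD ω v j (dirD ω v j (F a)) y := by
    intro j
    rw [dirD_sum ω v (fun a ha => (hF a ha).differentiable (by simp)) j,
      dirD_sum ω v (fun a ha => (smooth_dirD ω v (hF a ha) j).differentiable (by simp)) j]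
  simp only [key]
  rw [Finset.sum_comm]
  rfl

theorem Qop_const_mul {f : (Fin m → ℝ) → ℂ} (hf : ContDiff ℝ (⊤ : ℕ∞) f) (c : ℂ) :
    Qop ω v (fun y => c * f y) = fun y => c * Qop ω v f y := by
  funext x
  show ∑ j, dirD ω v j (dirD ω v j fun y => c * f y) x = _
  have key : ∀ j : Fin m, dirD ω v j (dirD ω v j fun y => c * f y)
      = fun y => c * dirD ω v j (dirD ω v j f) y := by
    intro j
    rw [dirD_const_mul ω v (hf.differentiable (by simp)) c j,
      dirD_const_mul ω v ((smooth_dirD ω v hf j).differentiable (by simp)) c j]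
  simp only [key]
  rw [← Finset.mul_sum]
  rfl

theorem Qop_mul {f g : (Fin m → ℝ) → ℂ} (hf : ContDiff ℝ (⊤ : ℕ∞) f) (hg : ContDiff ℝ (⊤ : ℕ∞) g) :
    Qop ω v (fun y => f y * g y) = fun y =>
      Qop ω v f y * g y + f y * Qop ω v g y + 2 * ∑ j, (dirD ω v j f y * dirD ω v j g y) := by
  have hdf : ∀ j, Differentiable ℝ (dirD ω v j f) :=
    fun j => (smooth_dirD ω v hf j).differentiable (by simp)
  have hdg : ∀ j, Differentiable ℝ (dirD ω v j g) :=
    fun j => (smooth_dirD ω v hg j).differentiable (by simp)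
  have key : ∀ j : Fin m, dirD ω v j (dirD ω v j fun y => f y * g y)
      = fun y => dirD ω v j (dirD ω v j f) y * g y + 2 * (dirD ω v j f y * dirD ω v j g y)
          + f y * dirD ω v j (dirD ω v j g) y := by
    intro j
    rw [dirD_mul ω v (hf.differentiable (by simp)) (hg.differentiable (by simp)) j,
      dirD_add ω v ((hdf j).fun_mul (hg.differentiable (by simp)))
        ((hf.differentiable (by simp)).fun_mul (hdg j)) j,
      dirD_mul ω v (hdf j) (hg.differentiable (by simp)) j,
      dirD_mul ω v (hf.differentiable (by simp)) (hdg j) j]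
    funext y
    ring
  funext y
  show ∑ j, dirD ω v j (dirD ω v j fun y => f y * g y) y = _
  simp only [key]
  rw [Finset.sum_add_distrib, Finset.sum_add_distrib, ← Finset.sum_mul, ← Finset.mul_sum,
    ← Finset.mul_sum]
  show Qop ω v f y * g y + 2 * _ + f y * Qop ω v g y = _
  ring

theorem opL_zero (L : List (Fin m)) (f : (Fin m → ℝ) → ℂ) : opL ω v L 0 f = f := by
  induction L with
  | nil => rfl
  | cons j L ih => rw [opL_cons, ih]; rfl

theorem multiD_zero (f : (Fin m → ℝ) → ℂ) : multiD ω v 0 f = f := opL_zero ω v _ f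

theorem smooth_multiD (α : Fin m → ℕ) {f : (Fin m → ℝ) → ℂ} (hf : ContDiff ℝ (⊤ : ℕ∞) f) :
    ContDiff ℝ (⊤ : ℕ∞) (multiD ω v α f) := smooth_opL ω v _ α hf

theorem multiD_single (α : Fin m → ℕ) (i : Fin m) {f : (Fin m → ℝ) → ℂ}
    (hf : ContDiff ℝ (⊤ : ℕ∞) f) :
    multiD ω v (α + Pi.single i 1) f = multiD ω v α (dirD ω v i f) :=
  opL_single ω v _ (List.nodup_finRange m) α (List.mem_finRange i) hf

theorem dirD_multiD_comm (α : Fin m → ℕ) {f : (Fin m → ℝ) → ℂ} (hf : ContDiff ℝ (⊤ : ℕ∞) f)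
    (i : Fin m) : dirD ω v i (multiD ω v α f) = multiD ω v α (dirD ω v i f) :=
  dirD_opL_comm ω v _ α hf i

theorem Qop_multiD_comm (α : Fin m → ℕ) {f : (Fin m → ℝ) → ℂ} (hf : ContDiff ℝ (⊤ : ℕ∞) f) :
    multiD ω v α (Qop ω v f) = Qop ω v (multiD ω v α f) :=
  Qop_opL_comm ω v _ α hf

/-- weight -/
def wt (i : Fin (m + 2)) : ℂ := if (i : ℕ) < 2 then 1 else 2

/-- the term -/
noncomputable def Tm (u w : (Fin m → ℝ) → ℂ) (β : Fin (m + 2) → ℕ) : (Fin m → ℝ) → ℂ :=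
  fun x => multiD ω v (fun i => β i.succ.succ) ((Qop ω v)^[β 0] u) x *
    multiD ω v (fun i => β i.succ.succ) ((Qop ω v)^[β 1] w) x

theorem smooth_Tm_left {u w : (Fin m → ℝ) → ℂ} (hu : ContDiff ℝ (⊤ : ℕ∞) u) (β : Fin (m + 2) → ℕ) :
    ContDiff ℝ (⊤ : ℕ∞) (multiD ω v (fun i => β i.succ.succ) ((Qop ω v)^[β 0] u)) :=
  smooth_multiD ω v _ (smooth_Qiter ω v hu _)

section nat_lemmas

variable (β : Fin (m + 2) → ℕ)

theorem tl_e0 : (fun i : Fin m => (β + Pi.single 0 1 : Fin (m + 2) → ℕ) i.succ.succ)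
    = fun i => β i.succ.succ := by
  funext i
  simp [Pi.single_apply, (Fin.succ_ne_zero _ : (i.succ.succ : Fin (m+2)) ≠ 0)]

theorem tl_e1 : (fun i : Fin m => (β + Pi.single 1 1 : Fin (m + 2) → ℕ) i.succ.succ)
    = fun i => β i.succ.succ := by
  funext i
  have h : (i.succ.succ : Fin (m + 2)) ≠ 1 := by
    rw [← Fin.succ_zero_eq_one]
    intro h
    exact Fin.succ_ne_zero i (Fin.succ_injective _ h)
  simp [Pi.single_apply, h]

theorem tl_ess (t : Fin m) :
    (fun i : Fin m => (β + Pi.single t.succ.succ 1 : Fin (m + 2) → ℕ) i.succ.succ)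
    = (fun i => β i.succ.succ) + Pi.single t 1 := by
  funext i
  simp [Pi.single_apply, Fin.succ_inj]

theorem val_e0_0 : (β + Pi.single 0 1 : Fin (m + 2) → ℕ) 0 = β 0 + 1 := by simp
theorem val_e0_1 : (β + Pi.single 0 1 : Fin (m + 2) → ℕ) 1 = β 1 := by
  simp [Pi.single_apply]
theorem val_e1_0 : (β + Pi.single 1 1 : Fin (m + 2) → ℕ) 0 = β 0 := by
  simp [Pi.single_apply]
theorem val_e1_1 : (β + Pi.single 1 1 : Fin (m + 2) → ℕ) 1 = β 1 + 1 := by simp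
theorem val_ess_0 (t : Fin m) : (β + Pi.single t.succ.succ 1 : Fin (m + 2) → ℕ) 0 = β 0 := by
  simp [Pi.single_apply, (Fin.succ_ne_zero _).symm]
theorem val_ess_1 (t : Fin m) : (β + Pi.single t.succ.succ 1 : Fin (m + 2) → ℕ) 1 = β 1 := by
  have h : (1 : Fin (m + 2)) ≠ t.succ.succ := by
    rw [← Fin.succ_zero_eq_one]
    exact fun h => Fin.succ_ne_zero t ((Fin.succ_injective _) h).symm
  simp [Pi.single_apply, h]

end nat_lemmas

section expand

variable {u w : (Fin m → ℝ) → ℂ} (hu : ContDiff ℝ (⊤ : ℕ∞) u) (hw : ContDiff ℝ (⊤ : ℕ∞) w)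

theorem wt_zero : wt (0 : Fin (m + 2)) = 1 := by simp [wt]
theorem wt_one : wt (1 : Fin (m + 2)) = 1 := by simp [wt]
theorem wt_ss (j : Fin m) : wt (j.succ.succ : Fin (m + 2)) = 2 := by
  simp [wt, Fin.val_succ]

include hu hw in
theorem QT (β : Fin (m + 2) → ℕ) :
    Qop ω v (Tm ω v u w β) =
      fun x => ∑ i : Fin (m + 2), wt i * Tm ω v u w (β + Pi.single i 1) x := by
  have hq0 : ContDiff ℝ (⊤ : ℕ∞) ((Qop ω v)^[β 0] u) := smooth_Qiter ω v hu (β 0)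
  have hq1 : ContDiff ℝ (⊤ : ℕ∞) ((Qop ω v)^[β 1] w) := smooth_Qiter ω v hw (β 1)
  have hFu : ContDiff ℝ (⊤ : ℕ∞) (multiD ω v (fun i => β i.succ.succ) ((Qop ω v)^[β 0] u)) :=
    smooth_multiD ω v _ hq0
  have hGw : ContDiff ℝ (⊤ : ℕ∞) (multiD ω v (fun i => β i.succ.succ) ((Qop ω v)^[β 1] w)) :=
    smooth_multiD ω v _ hq1
  have hT0 : Tm ω v u w (β + Pi.single 0 1) = fun x =>
      Qop ω v (multiD ω v (fun i => β i.succ.succ) ((Qop ω v)^[β 0] u)) x *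
        multiD ω v (fun i => β i.succ.succ) ((Qop ω v)^[β 1] w) x := by
    show (fun x => multiD ω v _ ((Qop ω v)^[(β + Pi.single 0 1 : Fin (m+2) → ℕ) 0] u) x *
      multiD ω v _ ((Qop ω v)^[(β + Pi.single 0 1 : Fin (m+2) → ℕ) 1] w) x) = _
    rw [tl_e0 β, val_e0_0 β, val_e0_1 β, Function.iterate_succ_apply',
      ← Qop_multiD_comm ω v _ hq0]
  have hT1 : Tm ω v u w (β + Pi.single 1 1) = fun x =>
      multiD ω v (fun i => β i.succ.succ) ((Qop ω v)^[β 0] u) x *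
        Qop ω v (multiD ω v (fun i => β i.succ.succ) ((Qop ω v)^[β 1] w)) x := by
    show (fun x => multiD ω v _ ((Qop ω v)^[(β + Pi.single 1 1 : Fin (m+2) → ℕ) 0] u) x *
      multiD ω v _ ((Qop ω v)^[(β + Pi.single 1 1 : Fin (m+2) → ℕ) 1] w) x) = _
    rw [tl_e1 β, val_e1_0 β, val_e1_1 β, Function.iterate_succ_apply',
      ← Qop_multiD_comm ω v _ hq1]
  have hTs : ∀ j : Fin m, Tm ω v u w (β + Pi.single j.succ.succ 1) = fun x =>
      dirD ω v j (multiD ω v (fun i => β i.succ.succ) ((Qop ω v)^[β 0] u)) x *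
        dirD ω v j (multiD ω v (fun i => β i.succ.succ) ((Qop ω v)^[β 1] w)) x := by
    intro j
    show (fun x =>
        multiD ω v _ ((Qop ω v)^[(β + Pi.single j.succ.succ 1 : Fin (m+2) → ℕ) 0] u) x *
        multiD ω v _ ((Qop ω v)^[(β + Pi.single j.succ.succ 1 : Fin (m+2) → ℕ) 1] w) x) = _
    rw [tl_ess β j, val_ess_0 β j, val_ess_1 β j,
      multiD_single ω v _ j hq0, multiD_single ω v _ j hq1,
      ← dirD_multiD_comm ω v _ hq0 j, ← dirD_multiD_comm ω v _ hq1 j]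
  have h := Qop_mul ω v hFu hGw
  funext x
  rw [show Tm ω v u w β = (fun y =>
      multiD ω v (fun i => β i.succ.succ) ((Qop ω v)^[β 0] u) y *
      multiD ω v (fun i => β i.succ.succ) ((Qop ω v)^[β 1] w) y) from rfl, h]
  rw [Fin.sum_univ_succ, Fin.sum_univ_succ, Fin.succ_zero_eq_one, wt_zero, wt_one,
    hT0, hT1]
  simp only [wt_ss, hTs]
  rw [Finset.mul_sum]
  ring

end expand

section comb

theorem sub_add_single {n : ℕ} (γ : Fin n → ℕ) (i : Fin n) (h : γ i ≠ 0) :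
    (γ - Pi.single i 1 : Fin n → ℕ) + Pi.single i 1 = γ := by
  funext t
  by_cases ht : t = i
  · subst ht; simp [Pi.sub_apply]; omega
  · simp [Pi.sub_apply, Pi.single_eq_of_ne ht]

theorem add_sub_single {n : ℕ} (β : Fin n → ℕ) (i : Fin n) :
    (β + Pi.single i 1 : Fin n → ℕ) - Pi.single i 1 = β := by
  funext t
  by_cases ht : t = i
  · subst ht; simp
  · simp [Pi.sub_apply, Pi.single_eq_of_ne ht]

theorem sum_add_single {n : ℕ} (β : Fin n → ℕ) (i : Fin n) :
    ∑ t, (β + Pi.single i 1 : Fin n → ℕ) t = (∑ t, β t) + 1 := by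
  simp [Finset.sum_add_distrib, Finset.sum_pi_single]

theorem pascal {n k : ℕ} (g : (Fin n → ℕ) → Fin n → ℂ) :
    ∑ β ∈ Finset.Nat.antidiagonalTuple n k, ∑ i : Fin n, g (β + Pi.single i 1) i =
    ∑ γ ∈ Finset.Nat.antidiagonalTuple n (k + 1),
      ∑ i ∈ Finset.univ.filter (fun i => γ i ≠ 0), g γ i := by
  refine Eq.trans (Finset.sum_sigma' _ _ _) (Eq.trans ?_ (Finset.sum_sigma' _ _ _).symm)
  refine Finset.sum_nbij' (fun p => ⟨p.1 + Pi.single p.2 1, p.2⟩)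
    (fun p => ⟨p.1 - Pi.single p.2 1, p.2⟩) ?_ ?_ ?_ ?_ ?_
  · rintro ⟨β, i⟩ hp
    simp only [Finset.mem_sigma, Finset.Nat.mem_antidiagonalTuple, Finset.mem_filter,
      Finset.mem_univ, true_and, and_true] at hp ⊢
    refine ⟨?_, ?_⟩
    · rw [sum_add_single, hp]
    · simp
  · rintro ⟨γ, i⟩ hp
    simp only [Finset.mem_sigma, Finset.Nat.mem_antidiagonalTuple, Finset.mem_filter,
      Finset.mem_univ, true_and, and_true] at hp ⊢
    obtain ⟨h1, hne⟩ := hp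
    have h2 := sum_add_single (γ - Pi.single i 1) i
    rw [sub_add_single γ i hne] at h2
    omega
  · rintro ⟨β, i⟩ _
    show (⟨β + Pi.single i 1 - Pi.single i 1, i⟩ : (_ : Fin n → ℕ) × Fin n) = ⟨β, i⟩
    rw [add_sub_single β i]
  · rintro ⟨γ, i⟩ hp
    simp only [Finset.mem_sigma, Finset.mem_filter, Finset.mem_univ, true_and] at hp
    show (⟨γ - Pi.single i 1 + Pi.single i 1, i⟩ : (_ : Fin n → ℕ) × Fin n) = ⟨γ, i⟩
    rw [sub_add_single γ i hp.2]
  · rintro ⟨β, i⟩ _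
    rfl

theorem fact_cast (n : ℕ) (h : n ≠ 0) :
    ((n.factorial : ℂ)) = (n : ℂ) * (((n - 1).factorial : ℂ)) := by
  rw [← Nat.cast_mul, Nat.mul_factorial_pred h]

theorem prod_fact_sub {n : ℕ} (g : Fin n → ℕ) (t : Fin n) (h : g t ≠ 0) :
    (∏ i, ((g i).factorial : ℂ)) =
      (g t : ℂ) * ∏ i, ((((g - Pi.single t 1 : Fin n → ℕ) i).factorial : ℂ)) := by
  rw [← Finset.mul_prod_erase Finset.univ _ (Finset.mem_univ t),
    ← Finset.mul_prod_erase Finset.univ _ (Finset.mem_univ t)]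
  have h1 : (g - Pi.single t 1 : Fin n → ℕ) t = g t - 1 := by simp
  rw [h1, ← mul_assoc, ← fact_cast _ h]
  congr 1
  refine Finset.prod_congr rfl fun i hi => ?_
  have : i ≠ t := (Finset.mem_erase.1 hi).1
  simp [Pi.sub_apply, Pi.single_eq_of_ne this]

theorem sum_sub_single {n : ℕ} (g : Fin n → ℕ) (t : Fin n) (h : g t ≠ 0) :
    ∑ i, g i = (∑ i, (g - Pi.single t 1 : Fin n → ℕ) i) + 1 := by
  have := sum_add_single (g - Pi.single t 1) t
  rw [sub_add_single g t h] at this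
  omega

end comb

section coeff

/-- The coefficient. -/
noncomputable def Cf (k : ℕ) (β : Fin (m + 2) → ℕ) : ℂ :=
  2 ^ (∑ i : Fin m, β i.succ.succ) * (k.factorial : ℂ) /
    (((β 0).factorial : ℂ) * ((β 1).factorial : ℂ) * ∏ i : Fin m, ((β i.succ.succ).factorial : ℂ))

variable (γ : Fin (m + 2) → ℕ)

theorem sub_e0_ss (i : Fin m) :
    (γ - Pi.single 0 1 : Fin (m + 2) → ℕ) i.succ.succ = γ i.succ.succ := by
  simp [Pi.sub_apply, Pi.single_apply, (Fin.succ_ne_zero _ : (i.succ.succ : Fin (m+2)) ≠ 0)]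

theorem sub_e0_0 : (γ - Pi.single 0 1 : Fin (m + 2) → ℕ) 0 = γ 0 - 1 := by simp
theorem sub_e0_1 : (γ - Pi.single 0 1 : Fin (m + 2) → ℕ) 1 = γ 1 := by
  simp [Pi.sub_apply, Pi.single_apply]

theorem ss_ne_one (i : Fin m) : (i.succ.succ : Fin (m + 2)) ≠ 1 := by
  rw [← Fin.succ_zero_eq_one]
  intro h
  exact Fin.succ_ne_zero i (Fin.succ_injective _ h)

theorem sub_e1_ss (i : Fin m) :
    (γ - Pi.single 1 1 : Fin (m + 2) → ℕ) i.succ.succ = γ i.succ.succ := by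
  simp [Pi.sub_apply, Pi.single_apply, ss_ne_one i]

theorem sub_e1_0 : (γ - Pi.single 1 1 : Fin (m + 2) → ℕ) 0 = γ 0 := by
  simp [Pi.sub_apply, Pi.single_apply]
theorem sub_e1_1 : (γ - Pi.single 1 1 : Fin (m + 2) → ℕ) 1 = γ 1 - 1 := by simp

theorem sub_ess_ss (t i : Fin m) :
    (γ - Pi.single t.succ.succ 1 : Fin (m + 2) → ℕ) i.succ.succ
      = ((fun s : Fin m => γ s.succ.succ) - Pi.single t 1 : Fin m → ℕ) i := by
  simp [Pi.sub_apply, Pi.single_apply, Fin.succ_inj]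

theorem sub_ess_0 (t : Fin m) : (γ - Pi.single t.succ.succ 1 : Fin (m + 2) → ℕ) 0 = γ 0 := by
  simp [Pi.sub_apply, Pi.single_apply, (Fin.succ_ne_zero _ : (t.succ.succ : Fin (m+2)) ≠ 0).symm]
theorem sub_ess_1 (t : Fin m) : (γ - Pi.single t.succ.succ 1 : Fin (m + 2) → ℕ) 1 = γ 1 := by
  simp [Pi.sub_apply, Pi.single_apply, (ss_ne_one t).symm]

theorem coeff_term (k : ℕ) (i : Fin (m + 2)) (hne : γ i ≠ 0) :
    wt i * Cf k (γ - Pi.single i 1) = (γ i : ℂ) * Cf k γ := by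
  have hfact : ∀ n : ℕ, ((n.factorial : ℂ)) ≠ 0 := fun n => Nat.cast_ne_zero.2 n.factorial_ne_zero
  have hprod : ∀ g : Fin m → ℕ, (∏ i, ((g i).factorial : ℂ)) ≠ 0 :=
    fun g => Finset.prod_ne_zero_iff.2 fun i _ => hfact _
  revert hne
  refine Fin.cases ?_ (fun i1 => ?_) i
  · intro hne
    have hc : ((γ 0 : ℕ) : ℂ) ≠ 0 := Nat.cast_ne_zero.2 hne
    rw [wt_zero, one_mul]
    simp only [Cf, sub_e0_ss, sub_e0_0, sub_e0_1]
    rw [fact_cast (γ 0) hne]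
    have h1 := hfact (γ 0 - 1)
    have h2 := hfact (γ 1)
    have h3 := hprod (fun s => γ s.succ.succ)
    field_simp
  · refine Fin.cases ?_ (fun t => ?_) i1
    · rw [Fin.succ_zero_eq_one]
      intro hne
      have hc : ((γ 1 : ℕ) : ℂ) ≠ 0 := Nat.cast_ne_zero.2 hne
      rw [wt_one, one_mul]
      simp only [Cf, sub_e1_ss, sub_e1_0, sub_e1_1]
      rw [fact_cast (γ 1) hne]
      have h1 := hfact (γ 0)
      have h2 := hfact (γ 1 - 1)
      have h3 := hprod (fun s => γ s.succ.succ)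
      field_simp
    · intro hne
      have hc : ((γ t.succ.succ : ℕ) : ℂ) ≠ 0 := Nat.cast_ne_zero.2 hne
      rw [wt_ss]
      simp only [Cf, sub_ess_ss, sub_ess_0, sub_ess_1]
      rw [prod_fact_sub (fun s => γ s.succ.succ) t hne,
        sum_sub_single (fun s => γ s.succ.succ) t hne, pow_succ]
      have key : ∀ N B : ℂ, ((γ t.succ.succ : ℕ) : ℂ) * (N / (((γ t.succ.succ : ℕ) : ℂ) * B))
          = N / B := fun N B => by rw [← mul_div_assoc, mul_div_mul_left _ _ hc]
      rw [mul_left_comm _ ((γ t.succ.succ : ℕ) : ℂ), key, ← mul_div_assoc]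
      congr 1
      ring

theorem coeff_step (k : ℕ) (hγ : ∑ i, γ i = k + 1) :
    ∑ i ∈ Finset.univ.filter (fun i => γ i ≠ 0), wt i * Cf k (γ - Pi.single i 1)
      = Cf (k + 1) γ := by
  rw [Finset.sum_congr rfl (fun i hi => coeff_term γ k i (Finset.mem_filter.1 hi).2),
    ← Finset.sum_mul]
  have h1 : (∑ i ∈ Finset.univ.filter (fun i => γ i ≠ 0), (γ i : ℂ)) = ((k : ℂ) + 1) := by
    have : ∑ i ∈ Finset.univ.filter (fun i => γ i ≠ 0), γ i = k + 1 := by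
      rw [Finset.sum_filter_ne_zero]
      exact hγ
    rw [← Nat.cast_sum]
    rw [this]
    push_cast
    ring
  rw [h1]
  simp only [Cf, Nat.factorial_succ]
  push_cast
  ring

end coeff

section main

variable {u w : (Fin m → ℝ) → ℂ} (hu : ContDiff ℝ (⊤ : ℕ∞) u) (hw : ContDiff ℝ (⊤ : ℕ∞) w)

include hu hw in
theorem main_expansion (k : ℕ) :
    (Qop ω v)^[k] (fun y => u y * w y) =
      fun x => ∑ β ∈ Finset.Nat.antidiagonalTuple (m + 2) k, Cf k β * Tm ω v u w β x := by
  induction k with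
  | zero =>
    funext x
    rw [Finset.Nat.antidiagonalTuple_zero_right, Finset.sum_singleton]
    have h1 : Cf (m := m) 0 0 = 1 := by simp [Cf]
    have h2 : Tm ω v u w 0 = fun x => multiD ω v 0 u x * multiD ω v 0 w x := rfl
    rw [h1, one_mul, h2, multiD_zero, multiD_zero]
    rfl
  | succ k ih =>
    have hTm : ∀ β : Fin (m + 2) → ℕ, ContDiff ℝ (⊤ : ℕ∞) (Tm ω v u w β) := fun β =>
      (smooth_Tm_left ω v (w := w) hu β).mul (smooth_multiD ω v _ (smooth_Qiter ω v hw (β 1)))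
    have hsm : ∀ β ∈ Finset.Nat.antidiagonalTuple (m + 2) k,
        ContDiff ℝ (⊤ : ℕ∞) (fun y => Cf k β * Tm ω v u w β y) := fun β _ =>
      contDiff_const.mul (hTm β)
    rw [Function.iterate_succ_apply', ih, Qop_sum ω v hsm]
    funext x
    have hstep : ∀ β ∈ Finset.Nat.antidiagonalTuple (m + 2) k,
        Qop ω v (fun y => Cf k β * Tm ω v u w β y) x =
          ∑ i : Fin (m + 2),
            (wt i * Cf k ((β + Pi.single i 1 : Fin (m + 2) → ℕ) - Pi.single i 1)) *
              Tm ω v u w (β + Pi.single i 1) x := by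
      intro β _
      rw [Qop_const_mul ω v (hTm β) (Cf k β), QT ω v hu hw β]
      dsimp only
      rw [Finset.mul_sum]
      refine Finset.sum_congr rfl fun i _ => ?_
      rw [add_sub_single]
      ring
    rw [Finset.sum_congr rfl hstep]
    have hp := pascal (n := m + 2) (k := k) (fun γ i => wt i * Cf k (γ - Pi.single i 1) * Tm ω v u w γ x)
    beta_reduce at hp
    rw [hp]
    refine Finset.sum_congr rfl fun γ hγ => ?_
    rw [← Finset.sum_mul, coeff_step γ k (Finset.Nat.mem_antidiagonalTuple.1 hγ)]

end main
end Aux2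

namespace Aux3

theorem split {n N : ℕ} (f : (Fin (n + 1) → ℕ) → ℂ) :
    ∑ β ∈ Finset.Nat.antidiagonalTuple (n + 1) N, f β =
    ∑ a ∈ Finset.range (N + 1), ∑ t ∈ Finset.Nat.antidiagonalTuple n (N - a),
      f (Fin.cons a t) := by
  rw [Finset.sum_sigma' (Finset.range (N + 1))
    (fun a => Finset.Nat.antidiagonalTuple n (N - a)) (fun a t => f (Fin.cons a t))]
  refine Finset.sum_nbij' (fun β => ⟨β 0, Fin.tail β⟩) (fun p => Fin.cons p.1 p.2)
    ?_ ?_ ?_ ?_ ?_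
  · intro β hβ
    rw [Finset.Nat.mem_antidiagonalTuple, Fin.sum_univ_succ] at hβ
    simp only [Finset.mem_sigma, Finset.mem_range, Finset.Nat.mem_antidiagonalTuple]
    constructor
    · omega
    · show ∑ i : Fin n, β i.succ = N - β 0
      omega
  · rintro ⟨a, t⟩ hp
    simp only [Finset.mem_sigma, Finset.mem_range, Finset.Nat.mem_antidiagonalTuple] at hp
    rw [Finset.Nat.mem_antidiagonalTuple, Fin.sum_univ_succ]
    simp only [Fin.cons_zero, Fin.cons_succ]
    omega
  · intro β _
    exact Fin.cons_self_tail β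
  · rintro ⟨a, t⟩ _
    simp [Fin.tail_cons]
  · intro β _
    rw [Fin.cons_self_tail]

end Aux3

/-- Leibniz-type expansion of `Q^k(uv)` for `Q = ⟨BD,D⟩`, `B` positive definite with
orthonormal eigenvectors `v_j` and eigenvalues `ω_j² > 0`. -/
theorem stmt_2 {m : ℕ} (B : Matrix (Fin m) (Fin m) ℝ) (hB : B.PosDef)
    (ω : Fin m → ℝ) (hω : ∀ j, 0 < ω j) (v : Fin m → (Fin m → ℝ))
    (heig : ∀ j, B.mulVec (v j) = (ω j ^ 2) • v j)
    (horth : ∀ i j, v i ⬝ᵥ v j = if i = j then (1 : ℝ) else 0)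
    (k : ℕ) (u w : (Fin m → ℝ) → ℂ) (hu : ContDiff ℝ (⊤ : ℕ∞) u) (hw : ContDiff ℝ (⊤ : ℕ∞) w) :
    ∀ x, (Qop ω v)^[k] (fun y => u y * w y) x =
      ∑ j ∈ Finset.range (k + 1), ∑ ℓ ∈ Finset.range (k + 1 - j),
        ∑ α ∈ Finset.Nat.antidiagonalTuple m (k - j - ℓ),
          ((2 : ℂ) ^ (∑ i, α i) * (k.factorial : ℂ) /
              ((j.factorial : ℂ) * (ℓ.factorial : ℂ) * ∏ i, ((α i).factorial : ℂ))) *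
            multiD ω v α ((Qop ω v)^[j] u) x * multiD ω v α ((Qop ω v)^[ℓ] w) x := by

  intro x
  rw [congrFun (Aux2.main_expansion ω v hu hw k) x]
  beta_reduce
  have hs1 := Aux3.split (n := m + 1) (N := k)
    (fun β => Aux2.Cf k β * Aux2.Tm ω v u w β x)
  beta_reduce at hs1
  rw [hs1]
  refine Finset.sum_congr rfl fun j hj => ?_
  have hs2 := Aux3.split (n := m) (N := k - j)
    (fun t => Aux2.Cf k (Fin.cons (↑j) t) * Aux2.Tm ω v u w (Fin.cons (↑j) t) x)
  beta_reduce at hs2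
  rw [hs2, show k + 1 - j = k - j + 1 by
    rw [Finset.mem_range] at hj
    omega]
  refine Finset.sum_congr rfl fun ℓ hℓ => ?_
  refine Finset.sum_congr rfl fun α hα => ?_
  have h1 : (Fin.cons j (Fin.cons ℓ α) : Fin (m + 2) → ℕ) 1 = ℓ := by
    rw [← Fin.succ_zero_eq_one, Fin.cons_succ, Fin.cons_zero]
  simp only [Aux2.Cf, Aux2.Tm, Fin.cons_succ, Fin.cons_zero, h1]
  ring
end

section
/- Let H(t) be the solution of the matrix Riccati equation H'(t) + H(t)² = F(t) on an interval [0, τ], where F(t) is a continuous family of real symmetric (m−1)×(m−1) matrices, with initial condition H(0) = H₀ a complex symmetric matrix with positive-definite imaginary part. Then H(t) exists for all t ∈ [0, τ], H(t) is complex symmetric, and Im H(t) is positive-definite for all t ∈ [0, τ]. -/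
/-!
Write `H = Z Y⁻¹`, where `(Y, Z)` solves the linear Jacobi system `Y' = Z`, `Z' = F Y` with
`Y 0 = 1`, `Z 0 = H₀`; being linear, this system is solvable on all of `[0, τ]`. Because `F` is
real symmetric, the Wronskians `Yᵀ Z - Zᵀ Y` and `Yᴴ Z - Zᴴ Y` are constant, equal to `0` and to
`H₀ - H₀ᴴ = 2i Im H₀`. The second one keeps `Y` invertible (`Y w = 0` would force
`Im ⟪w, H₀ w⟫ = 0`), so `H` exists on `[0, τ]` and solves the Riccati equation; the first makes
`H` symmetric, and for `x = Y w` the second gives `Im ⟪x, H x⟫ = Im ⟪w, H₀ w⟫ > 0`.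
-/

open Matrix Set
open scoped NNReal ComplexConjugate

section IntegralCurve

variable {E : Type*} [NormedAddCommGroup E] [NormedSpace ℝ E] {v : ℝ → E → E} {γ δ : ℝ → E}
  {s s' : Set ℝ}

theorem IsIntegralCurveOn.congr (hγ : IsIntegralCurveOn γ v s) (h : EqOn γ δ s) :
    IsIntegralCurveOn δ v s := fun t ht =>
  h ht ▸ (hγ t ht).congr_of_mem (fun _ hu => (h hu).symm) ht

theorem IsIntegralCurveOn.union_of_isClosed (hs : IsClosed s) (hs' : IsClosed s')
    (hγ : IsIntegralCurveOn γ v s) (hγ' : IsIntegralCurveOn γ v s') :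
    IsIntegralCurveOn γ v (s ∪ s') := by
  have within : ∀ {u : Set ℝ}, IsClosed u → IsIntegralCurveOn γ v u →
      ∀ t, HasDerivWithinAt γ (v t (γ t)) u t := by
    intro u hu hγu t
    by_cases ht : t ∈ u
    · exact hγu t ht
    · exact HasFDerivWithinAt.of_notMem_closure (by rwa [hu.closure_eq])
  exact fun t _ => (within hs hγ t).union (within hs' hγ' t)

theorem IsIntegralCurveOn.piecewise_Icc {a b c : ℝ} (hab : a ≤ b) (hbc : b ≤ c)
    (hγ : IsIntegralCurveOn γ v (Icc a b)) (hδ : IsIntegralCurveOn δ v (Icc b c))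
    (hb : γ b = δ b) :
    IsIntegralCurveOn (fun t => if t ≤ b then γ t else δ t) v (Icc a c) := by
  rw [← Icc_union_Icc_eq_Icc hab hbc]
  refine .union_of_isClosed isClosed_Icc isClosed_Icc
    (hγ.congr fun t ht => (if_pos ht.2).symm) (hδ.congr fun t ht => ?_)
  rcases ht.1.eq_or_lt with rfl | hlt
  · simp [hb]
  · simp [not_le.2 hlt]

variable [CompleteSpace E]

theorem exists_isIntegralCurveOn_Icc_of_lipschitzWith_of_mul_le {K : ℝ≥0} {a c : ℝ} (hac : a ≤ c)
    (hlip : ∀ t ∈ Icc a c, LipschitzWith K (v t)) (hv0 : ∀ t ∈ Icc a c, v t 0 = 0)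
    (hcont : ∀ x, ContinuousOn (v · x) (Icc a c)) (hsmall : K * (c - a) ≤ 1 / 2) (x₀ : E) :
    ∃ γ : ℝ → E, γ a = x₀ ∧ IsIntegralCurveOn γ v (Icc a c) := by
  have hv : IsPicardLindelof v ⟨a, left_mem_Icc.2 hac⟩ x₀ ‖x₀‖₊ 0 (2 * K * ‖x₀‖₊) K := by
    refine ⟨fun t ht => (hlip t ht).lipschitzOnWith, fun x _ => hcont x, fun t ht x hx => ?_, ?_⟩
    · have hx : ‖x‖ ≤ 2 * ‖x₀‖ := by linarith [coe_nnnorm x₀ ▸ norm_le_of_mem_closedBall hx]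
      calc ‖v t x‖ = ‖v t x - v t 0‖ := by rw [hv0 t ht, sub_zero]
        _ ≤ K * ‖x - 0‖ := (hlip t ht).norm_sub_le x 0
        _ ≤ 2 * K * ‖x₀‖ := by rw [sub_zero]; nlinarith [K.coe_nonneg]
    · simp only [NNReal.coe_mul, NNReal.coe_ofNat, coe_nnnorm, sub_self, NNReal.coe_zero,
        sub_zero, max_eq_left (sub_nonneg.2 hac)]
      nlinarith [norm_nonneg x₀]
  exact hv.exists_eq_forall_mem_Icc_hasDerivWithinAt₀

theorem exists_isIntegralCurveOn_Icc_of_lipschitzWith {K : ℝ≥0} {a b : ℝ} (hab : a ≤ b)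
    (hlip : ∀ t ∈ Icc a b, LipschitzWith K (v t)) (hv0 : ∀ t ∈ Icc a b, v t 0 = 0)
    (hcont : ∀ x, ContinuousOn (v · x) (Icc a b)) (x₀ : E) :
    ∃ γ : ℝ → E, γ a = x₀ ∧ IsIntegralCurveOn γ v (Icc a b) := by
  set step : ℝ := 1 / (2 * (K + 1)) with step_def
  have hpos : 0 < step := by positivity
  have hKstep : K * step ≤ 1 / 2 := by
    rw [step_def, mul_one_div, div_le_div_iff₀ (by positivity) two_pos]; linarith
  have local_step : ∀ c ∈ Icc a b, ∀ c' ∈ Icc c b, c' - c ≤ step →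
      ∀ y, ∃ γ : ℝ → E, γ c = y ∧ IsIntegralCurveOn γ v (Icc c c') := fun c hc c' hc' hcc' =>
    have sub : Icc c c' ⊆ Icc a b := Icc_subset_Icc hc.1 hc'.2
    exists_isIntegralCurveOn_Icc_of_lipschitzWith_of_mul_le hc'.1 (fun t ht => hlip t (sub ht))
      (fun t ht => hv0 t (sub ht)) (fun x => (hcont x).mono sub)
      (by nlinarith [K.coe_nonneg])
  have reach : ∀ n : ℕ, ∀ c ∈ Icc a b, c ≤ a + n * step →
      ∃ γ : ℝ → E, γ a = x₀ ∧ IsIntegralCurveOn γ v (Icc a c) := by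
    intro n
    induction n with
    | zero =>
      intro c hc hca
      obtain rfl : c = a := le_antisymm (by simpa using hca) hc.1
      exact local_step c hc c ⟨le_rfl, hc.2⟩ (by simp [hpos.le]) x₀
    | succ n ih =>
      intro c hc hcn
      by_cases hle : c ≤ a + n * step
      · exact ih c hc hle
      set c' := a + n * step
      have hc' : c' ∈ Icc a b := ⟨le_add_of_nonneg_right (by positivity), by linarith [hc.2]⟩
      obtain ⟨γ, hγa, hγ⟩ := ih c' hc' le_rfl
      obtain ⟨δ, hδc', hδ⟩ := local_step c' hc' c ⟨by linarith, hc.2⟩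
        (by push_cast at hcn; linarith) (γ c')
      exact ⟨_, by simp [hγa, hc'.1], hγ.piecewise_Icc hc'.1 (by linarith) hδ hδc'.symm⟩
  obtain ⟨n, hn⟩ := exists_nat_ge ((b - a) / step)
  exact reach n b ⟨hab, le_rfl⟩ (by rw [div_le_iff₀ hpos] at hn; linarith)

end IntegralCurve

section Jacobi

variable {𝔸 : Type*} [NormedRing 𝔸] [NormedAlgebra ℝ 𝔸] {F Y Z : ℝ → 𝔸} {s : Set ℝ} {t : ℝ}

theorem exists_jacobi_solution [CompleteSpace 𝔸] {a b : ℝ} (hab : a ≤ b)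
    (hF : ContinuousOn F (Icc a b)) (Y₀ Z₀ : 𝔸) :
    ∃ Y Z : ℝ → 𝔸, Y a = Y₀ ∧ Z a = Z₀ ∧ ∀ t ∈ Icc a b,
      HasDerivWithinAt Y (Z t) (Icc a b) t ∧ HasDerivWithinAt Z (F t * Y t) (Icc a b) t := by
  obtain ⟨C, hC⟩ := isCompact_Icc.exists_bound_of_continuousOn hF
  have hmul : ∀ t ∈ Icc a b, LipschitzWith C.toNNReal (F t * ·) := fun t ht =>
    .of_dist_le_mul fun x y => by
      rw [dist_eq_norm, dist_eq_norm, ← mul_sub]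
      exact (norm_mul_le _ _).trans
        (mul_le_mul_of_nonneg_right ((hC t ht).trans (Real.le_coe_toNNReal C)) (norm_nonneg _))
  obtain ⟨γ, hγa, hγ⟩ := exists_isIntegralCurveOn_Icc_of_lipschitzWith
    (v := fun t p => (p.2, F t * p.1)) hab
    (fun t ht => LipschitzWith.prod_snd.prodMk ((hmul t ht).comp LipschitzWith.prod_fst))
    (fun t _ => by simp)
    (fun p => continuousOn_const.prodMk (hF.mul continuousOn_const)) (Y₀, Z₀)
  refine ⟨fun u => (γ u).1, fun u => (γ u).2, by simp [hγa], by simp [hγa], fun t ht => ?_⟩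
  have hY := hasFDerivAt_fst.comp_hasDerivWithinAt t (hγ t ht)
  have hZ := hasFDerivAt_snd.comp_hasDerivWithinAt t (hγ t ht)
  exact ⟨hY, hZ⟩

/-- Radon's lemma. -/
theorem hasDerivWithinAt_riccati_of_jacobi [HasSummableGeomSeries 𝔸]
    (hY : HasDerivWithinAt Y (Z t) s t) (hZ : HasDerivWithinAt Z (F t * Y t) s t)
    (hunit : IsUnit (Y t)) :
    HasDerivWithinAt (fun u => Z u * Ring.inverse (Y u))
      (F t - Z t * Ring.inverse (Y t) * (Z t * Ring.inverse (Y t))) s t := by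
  obtain ⟨u, hu⟩ := hunit
  have hinv := hasFDerivAt_ringInverse (𝕜 := ℝ) u
  rw [hu] at hinv
  refine (hZ.fun_mul (hinv.comp_hasDerivWithinAt t hY)).congr_deriv ?_
  simp only [← hu, Function.comp_apply, Ring.inverse_unit, _root_.neg_apply,
    ContinuousLinearMap.mulLeftRight_apply]
  rw [mul_assoc (F t), Units.mul_inv, mul_one]
  noncomm_ring

theorem wronskian_eq_of_jacobi (φ : 𝔸 →L[ℝ] 𝔸) (hφ : ∀ x y, φ (x * y) = φ y * φ x)
    {a b : ℝ} (hF : ∀ t ∈ Icc a b, φ (F t) = F t)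
    (hY : ∀ t ∈ Icc a b, HasDerivWithinAt Y (Z t) (Icc a b) t)
    (hZ : ∀ t ∈ Icc a b, HasDerivWithinAt Z (F t * Y t) (Icc a b) t) :
    ∀ t ∈ Icc a b, φ (Y t) * Z t - φ (Z t) * Y t = φ (Y a) * Z a - φ (Z a) * Y a := by
  have hderiv : ∀ t ∈ Icc a b, HasDerivWithinAt (fun u => φ (Y u) * Z u - φ (Z u) * Y u) 0
      (Icc a b) t := by
    intro t ht
    have hφY := φ.hasFDerivAt.comp_hasDerivWithinAt t (hY t ht)
    have hφZ := φ.hasFDerivAt.comp_hasDerivWithinAt t (hZ t ht)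
    refine ((hφY.fun_mul (hZ t ht)).fun_sub (hφZ.fun_mul (hY t ht))).congr_deriv ?_
    simp only [Function.comp_apply, hφ, hF t ht]
    noncomm_ring
  refine constant_of_has_deriv_right_zero (fun t ht => (hderiv t ht).continuousWithinAt)
    fun t ht => ?_
  exact ((hderiv t (Ico_subset_Icc_self ht)).mono (Icc_subset_Icc_left ht.1)).mono_of_mem_nhdsWithin
    (Icc_mem_nhdsGE ht.2)

end Jacobi

theorem Finset.sum_sum_eq_zero_of_antisymm {n : Type*} [Fintype n] {f : n → n → ℝ}
    (hf : ∀ i j, f j i = -f i j) : ∑ i, ∑ j, f i j = 0 := by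
  have h : ∑ i, ∑ j, f i j = ∑ i, ∑ j, -f i j := by
    rw [Finset.sum_comm]
    exact Finset.sum_congr rfl fun i _ => Finset.sum_congr rfl fun j _ => hf i j
  simp only [Finset.sum_neg_distrib] at h
  linarith

section ComplexQuadraticForm

variable {n : Type*} [Fintype n]

theorem im_star_dotProduct_mulVec_of_transpose_eq {M : Matrix n n ℂ} (hM : Mᵀ = M) (w : n → ℂ) :
    (star w ⬝ᵥ M *ᵥ w).im = (fun i => (w i).re) ⬝ᵥ M.map Complex.im *ᵥ (fun i => (w i).re)
      + (fun i => (w i).im) ⬝ᵥ M.map Complex.im *ᵥ (fun i => (w i).im) := by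
  have hsymm : ∀ i j, M j i = M i j := fun i j => by rw [← transpose_apply M i j, hM]
  -- the real part of `M` pairs `re w` with `im w` antisymmetrically, so it drops out
  have hcross : ∑ i, ∑ j, (M i j).re * ((w i).re * (w j).im - (w i).im * (w j).re) = 0 :=
    Finset.sum_sum_eq_zero_of_antisymm fun i j => by rw [hsymm i j]; ring
  calc (star w ⬝ᵥ M *ᵥ w).im
      = ∑ i, ∑ j, ((M i j).im * ((w i).re * (w j).re + (w i).im * (w j).im)
          + (M i j).re * ((w i).re * (w j).im - (w i).im * (w j).re)) := by
        simp only [dotProduct, mulVec, Pi.star_apply, Complex.im_sum, Finset.mul_sum]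
        refine Finset.sum_congr rfl fun i _ => Finset.sum_congr rfl fun j _ => ?_
        simp only [RCLike.star_def, Complex.mul_im, Complex.mul_re, Complex.conj_re,
          Complex.conj_im]
        ring
    _ = ∑ i, ∑ j, (M i j).im * ((w i).re * (w j).re + (w i).im * (w j).im) := by
        simp only [Finset.sum_add_distrib, hcross, add_zero]
    _ = _ := by
        simp only [dotProduct, mulVec, map_apply, Finset.mul_sum, ← Finset.sum_add_distrib]
        refine Finset.sum_congr rfl fun i _ => Finset.sum_congr rfl fun j _ => ?_
        ring

theorem im_star_dotProduct_mulVec_pos {M : Matrix n n ℂ} (hM : Mᵀ = M)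
    (hpos : (M.map Complex.im).PosDef) {w : n → ℂ} (hw : w ≠ 0) :
    0 < (star w ⬝ᵥ M *ᵥ w).im := by
  rw [im_star_dotProduct_mulVec_of_transpose_eq hM]
  have hnonneg (x : n → ℝ) : 0 ≤ x ⬝ᵥ M.map Complex.im *ᵥ x := by
    simpa using hpos.posSemidef.dotProduct_mulVec_nonneg x
  have hpos' {x : n → ℝ} (hx : x ≠ 0) : 0 < x ⬝ᵥ M.map Complex.im *ᵥ x := by
    simpa using hpos.dotProduct_mulVec_pos hx
  by_cases hre : (fun i => (w i).re) = 0
  · have him : (fun i => (w i).im) ≠ 0 := fun him => hw <| funext fun i =>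
      Complex.ext (congrFun hre i) (congrFun him i)
    exact add_pos_of_nonneg_of_pos (hnonneg _) (hpos' him)
  · exact add_pos_of_pos_of_nonneg (hpos' hre) (hnonneg _)

theorem im_star_dotProduct_mulVec_eq_of_sub_conjTranspose_eq {M N : Matrix n n ℂ}
    (h : M - Mᴴ = N - Nᴴ) (w : n → ℂ) :
    (star w ⬝ᵥ M *ᵥ w).im = (star w ⬝ᵥ N *ᵥ w).im := by
  have key (A : Matrix n n ℂ) :
      star w ⬝ᵥ (A - Aᴴ) *ᵥ w = ((2 * (star w ⬝ᵥ A *ᵥ w).im : ℝ) : ℂ) * Complex.I := by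
    have hconj : star w ⬝ᵥ Aᴴ *ᵥ w = conj (star w ⬝ᵥ A *ᵥ w) := by
      rw [star_dotProduct (v := w), star_mulVec, conjTranspose_conjTranspose,
        ← dotProduct_mulVec]
      rfl
    rw [sub_mulVec, dotProduct_sub, hconj, Complex.sub_conj]
  have := key M
  rw [h, key N, mul_left_inj' Complex.I_ne_zero, Complex.ofReal_inj] at this
  linarith

variable [DecidableEq n]

theorem isUnit_det_of_conjTranspose_mul_sub_eq {Y Z H₀ : Matrix n n ℂ} (hH₀ : H₀ᵀ = H₀)
    (hpos : (H₀.map Complex.im).PosDef) (h : Yᴴ * Z - Zᴴ * Y = H₀ - H₀ᴴ) : IsUnit Y.det := by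
  rw [isUnit_iff_ne_zero]
  intro hdet
  obtain ⟨w, hw, hYw⟩ := exists_mulVec_eq_zero_iff.mpr hdet
  have hzero : star w ⬝ᵥ (Yᴴ * Z) *ᵥ w = 0 := by
    rw [← mulVec_mulVec, dotProduct_mulVec, ← star_mulVec, hYw, star_zero, zero_dotProduct]
  have hsub : Yᴴ * Z - (Yᴴ * Z)ᴴ = H₀ - H₀ᴴ := by
    rw [conjTranspose_mul, conjTranspose_conjTranspose, h]
  have := im_star_dotProduct_mulVec_pos hH₀ hpos hw
  rw [← im_star_dotProduct_mulVec_eq_of_sub_conjTranspose_eq hsub, hzero, Complex.zero_im] at this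
  exact lt_irrefl 0 this

theorem posDef_map_im_mul_inv_of_conjTranspose_mul_sub_eq {Y Z H₀ : Matrix n n ℂ}
    (hH₀ : H₀ᵀ = H₀) (hpos : (H₀.map Complex.im).PosDef) (h : Yᴴ * Z - Zᴴ * Y = H₀ - H₀ᴴ)
    (hY : IsUnit Y.det) (hsymm : (Z * Y⁻¹)ᵀ = Z * Y⁻¹) :
    ((Z * Y⁻¹).map Complex.im).PosDef := by
  refine posDef_iff_dotProduct_mulVec.mpr ⟨?_, fun x hx => ?_⟩
  · rw [IsHermitian, conjTranspose_eq_transpose_of_trivial, ← transpose_map, hsymm]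
  obtain ⟨w, hYw⟩ : ∃ w, Y *ᵥ w = fun i => (x i : ℂ) :=
    ⟨Y⁻¹ *ᵥ _, by rw [mulVec_mulVec, mul_nonsing_inv _ hY, one_mulVec]⟩
  have hw : w ≠ 0 := fun hw => hx <| funext fun i => by
    simpa [hw] using (congrFun hYw i).symm
  have hquad : x ⬝ᵥ (Z * Y⁻¹).map Complex.im *ᵥ x = (star w ⬝ᵥ (Yᴴ * Z) *ᵥ w).im := by
    have hreal := im_star_dotProduct_mulVec_of_transpose_eq hsymm (Y *ᵥ w)
    have hzero : (fun _ : n => (0 : ℝ)) = 0 := rfl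
    simp only [hYw, Complex.ofReal_re, Complex.ofReal_im, hzero, zero_dotProduct,
      add_zero] at hreal
    rw [← hreal, ← hYw, mulVec_mulVec, Matrix.mul_assoc, nonsing_inv_mul _ hY, Matrix.mul_one,
      star_mulVec, ← dotProduct_mulVec, mulVec_mulVec]
  have hsub : Yᴴ * Z - (Yᴴ * Z)ᴴ = H₀ - H₀ᴴ := by
    rw [conjTranspose_mul, conjTranspose_conjTranspose, h]
  rw [star_trivial, hquad, im_star_dotProduct_mulVec_eq_of_sub_conjTranspose_eq hsub]
  exact im_star_dotProduct_mulVec_pos hH₀ hpos hw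

end ComplexQuadraticForm

theorem Matrix.transpose_mul_inv_eq_of_transpose_mul_eq {n R : Type*} [Fintype n] [DecidableEq n]
    [CommRing R] {A B : Matrix n n R} (hA : IsUnit A.det) (h : Aᵀ * B = Bᵀ * A) :
    (B * A⁻¹)ᵀ = B * A⁻¹ := by
  have hAT : IsUnit Aᵀ.det := by rwa [det_transpose]
  calc (B * A⁻¹)ᵀ = (Aᵀ)⁻¹ * (Bᵀ * A) * A⁻¹ := by
        rw [transpose_mul, transpose_nonsing_inv, Matrix.mul_assoc, Matrix.mul_assoc,
          mul_nonsing_inv _ hA, Matrix.mul_one]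
    _ = B * A⁻¹ := by
        rw [← h, ← Matrix.mul_assoc, nonsing_inv_mul _ hAT, Matrix.one_mul]

-- Any algebra norm on matrices would do; the derivatives below do not depend on the choice.
attribute [local instance] Matrix.linftyOpNormedRing Matrix.linftyOpNormedAlgebra

theorem HasDerivWithinAt.matrix_apply {n : Type*} [Fintype n] [DecidableEq n]
    {f : ℝ → Matrix n n ℂ} {f' : Matrix n n ℂ} {s : Set ℝ} {t : ℝ}
    (h : HasDerivWithinAt f f' s t) (i j : n) :
    HasDerivWithinAt (fun u => f u i j) (f' i j) s t :=
  ((ContinuousLinearMap.proj (R := ℝ) j).comp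
    (ContinuousLinearMap.proj (R := ℝ) (φ := fun _ : n => n → ℂ) i)).hasFDerivAt
    |>.comp_hasDerivWithinAt t h

section MatrixJacobi

variable {n : Type*} [Fintype n] [DecidableEq n] {F Y Z : ℝ → Matrix n n ℂ} {a b : ℝ}

theorem conjTranspose_wronskian_eq_of_jacobi (hF : ∀ t ∈ Icc a b, (F t)ᴴ = F t)
    (hY : ∀ t ∈ Icc a b, HasDerivWithinAt Y (Z t) (Icc a b) t)
    (hZ : ∀ t ∈ Icc a b, HasDerivWithinAt Z (F t * Y t) (Icc a b) t) :
    ∀ t ∈ Icc a b, (Y t)ᴴ * Z t - (Z t)ᴴ * Y t = (Y a)ᴴ * Z a - (Z a)ᴴ * Y a :=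
  wronskian_eq_of_jacobi (starL' ℝ : Matrix n n ℂ ≃L[ℝ] Matrix n n ℂ).toContinuousLinearMap
    (fun x y => star_mul x y) hF hY hZ

theorem transpose_wronskian_eq_of_jacobi (hF : ∀ t ∈ Icc a b, (F t)ᵀ = F t)
    (hY : ∀ t ∈ Icc a b, HasDerivWithinAt Y (Z t) (Icc a b) t)
    (hZ : ∀ t ∈ Icc a b, HasDerivWithinAt Z (F t * Y t) (Icc a b) t) :
    ∀ t ∈ Icc a b, (Y t)ᵀ * Z t - (Z t)ᵀ * Y t = (Y a)ᵀ * Z a - (Z a)ᵀ * Y a :=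
  wronskian_eq_of_jacobi
    (LinearMap.toContinuousLinearMap (transposeLinearEquiv n n ℝ ℂ).toLinearMap)
    (fun x y => transpose_mul x y) hF hY hZ

end MatrixJacobi

/-- Global solvability of the matrix Riccati equation `H' + H² = F` on `[0, τ]` with `F`
continuous real symmetric and `H(0) = H₀` complex symmetric with positive-definite imaginary
part: the solution `H(t)` exists on all of `[0, τ]`, is complex symmetric, and `Im H(t)`
remains positive definite. -/
theorem stmt_19 (d : ℕ) (τ : ℝ) (hτ : 0 < τ) (F : ℝ → Matrix (Fin d) (Fin d) ℝ)
    (hFcont : Continuous F) (hFsymm : ∀ t, (F t)ᵀ = F t)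
    (H₀ : Matrix (Fin d) (Fin d) ℂ) (hH₀symm : H₀ᵀ = H₀)
    (hH₀im : (Matrix.of fun i j => (H₀ i j).im : Matrix (Fin d) (Fin d) ℝ).PosDef) :
    ∃ H : ℝ → Matrix (Fin d) (Fin d) ℂ, H 0 = H₀ ∧
      (∀ t ∈ Set.Icc (0 : ℝ) τ, ∀ i j, HasDerivWithinAt (fun s => H s i j)
        (((F t).map Complex.ofReal - H t * H t) i j) (Set.Icc (0 : ℝ) τ) t) ∧
      ∀ t ∈ Set.Icc (0 : ℝ) τ, (H t)ᵀ = H t ∧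
        (Matrix.of fun i j => (H t i j).im : Matrix (Fin d) (Fin d) ℝ).PosDef := by
  set Fc : ℝ → Matrix (Fin d) (Fin d) ℂ := fun t => (F t).map Complex.ofReal
  have hFc_transpose (t : ℝ) : (Fc t)ᵀ = Fc t := by simp [Fc, ← transpose_map, hFsymm]
  have hFc_conjTranspose (t : ℝ) : (Fc t)ᴴ = Fc t := by
    ext i j
    simpa [Fc] using congrFun (congrFun (hFsymm t) i) j
  obtain ⟨Y, Z, hY0, hZ0, hYZ⟩ := exists_jacobi_solution hτ.le
    (hFcont.matrix_map Complex.continuous_ofReal).continuousOn 1 H₀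
  have hY t (ht : t ∈ Icc 0 τ) := (hYZ t ht).1
  have hZ t (ht : t ∈ Icc 0 τ) := (hYZ t ht).2
  have hherm : ∀ t ∈ Icc 0 τ, (Y t)ᴴ * Z t - (Z t)ᴴ * Y t = H₀ - H₀ᴴ := by
    simpa [hY0, hZ0] using
      conjTranspose_wronskian_eq_of_jacobi (fun t _ => hFc_conjTranspose t) hY hZ
  have hsymm : ∀ t ∈ Icc 0 τ, (Y t)ᵀ * Z t = (Z t)ᵀ * Y t := by
    simpa [hY0, hZ0, hH₀symm, sub_eq_zero] using
      transpose_wronskian_eq_of_jacobi (fun t _ => hFc_transpose t) hY hZ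
  have hunit t (ht : t ∈ Icc 0 τ) :=
    isUnit_det_of_conjTranspose_mul_sub_eq hH₀symm hH₀im (hherm t ht)
  refine ⟨fun t => Z t * (Y t)⁻¹, by simp [hY0, hZ0], fun t ht => ?_, fun t ht => ?_⟩
  · have hric := hasDerivWithinAt_riccati_of_jacobi (F := Fc) (hY t ht) (hZ t ht)
      ((isUnit_iff_isUnit_det _).mpr (hunit t ht))
    simp only [← nonsing_inv_eq_ringInverse] at hric
    exact hric.matrix_apply
  · have hHsymm := transpose_mul_inv_eq_of_transpose_mul_eq (hunit t ht) (hsymm t ht)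
    exact ⟨hHsymm, posDef_map_im_mul_inv_of_conjTranspose_mul_sub_eq hH₀symm hH₀im
      (hherm t ht) (hunit t ht) hHsymm⟩
end
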